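/- Let 𝒜 be an abelian category and (𝒦, 𝒦^⊥) a cotorsion theory in 𝒜. Then the class Ch(𝒦) of chain complexes with all entries in 𝒦 is the left class of a cotorsion theory in Ch(𝒜): (Ch(𝒦), Ch(𝒦)^⊥) is a cotorsion theory, and moreover the disk complexes Dⁿ(Y) for Y ∈ 𝒦^⊥ lie in Ch(𝒦)^⊥. -/

import Mathlib

open CategoryTheory Limits ZeroObject

universe v' u' v u

section Perp

variable {𝒞 : Type u'} [Category.{v'} 𝒞] [Abelian 𝒞]

/-- `Y ∈ rightPerpSplit K` iff every short exact sequence `Y ↣ E ↠ Q` with `Q ∈ K`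
splits. -/
def rightPerpSplit (K : Set 𝒞) : Set 𝒞 :=
  {Y | ∀ ⦃E Q : 𝒞⦄ (i : Y ⟶ E) (p : E ⟶ Q) (w : i ≫ p = 0),
    (ShortComplex.mk i p w).ShortExact → Q ∈ K → ∃ r : E ⟶ Y, i ≫ r = 𝟙 Y}

/-- `X ∈ leftPerpSplit K` iff every short exact sequence `Y ↣ E ↠ X` with `Y ∈ K`
splits. -/
def leftPerpSplit (K : Set 𝒞) : Set 𝒞 :=
  {X | ∀ ⦃Y E : 𝒞⦄ (i : Y ⟶ E) (p : E ⟶ X) (w : i ≫ p = 0),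
    (ShortComplex.mk i p w).ShortExact → Y ∈ K → ∃ s : X ⟶ E, s ≫ p = 𝟙 X}

end Perp

variable {𝒜 : Type u} [Category.{v} 𝒜] [Abelian 𝒜]

/-- The class of complexes that are degreewise in `K`. -/
def ChCls (K : Set 𝒜) : Set (ChainComplex 𝒜 ℤ) :=
  {C | ∀ n : ℤ, C.X n ∈ K}

/-- The disk complex `Dⁿ(Y)`: `Y` in degrees `n` and `n - 1` with identity
differential, `0` elsewhere. -/
noncomputable def disk (n : ℤ) (Y : 𝒜) : ChainComplex 𝒜 ℤ where
  X i := if i = n ∨ i = n - 1 then Y else 0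
  d i j :=
    if h : i = n ∧ j = n - 1 then
      eqToHom (if_pos (Or.inl h.1)) ≫ eqToHom (if_pos (Or.inr h.2)).symm
    else 0
  shape i j hij := by
    refine dif_neg ?_
    rintro ⟨rfl, rfl⟩
    simp only [ComplexShape.down_Rel] at hij
    omega
  d_comp_d' i j k _ _ := by
    by_cases h : i = n ∧ j = n - 1
    · obtain ⟨h1, h2⟩ := h
      rw [dif_neg (show ¬(j = n ∧ k = n - 1) by rintro ⟨h3, -⟩; omega), comp_zero]
    · rw [dif_neg h, zero_comp]

/-!
The disk functor `Dⁿ` is exact and right adjoint to evaluation in degree `n - 1`. Hence a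
retraction of `Y ↣ E_{n-1}`, which exists when `Y ∈ 𝒦^⊥` and the cokernel lies in `𝒦`, extends
to a retraction of `Dⁿ(Y) ↣ E`. Conversely, let `C ∈ ⊥(Ch(𝒦)^⊥)` and `Y ↣ E ↠ C_{n-1}` with
`Y ∈ 𝒦^⊥`. Applying `Dⁿ` and pulling back along the unit `C ⟶ Dⁿ(C_{n-1})` gives a short exact
sequence ending in `C` with kernel `Dⁿ(Y) ∈ Ch(𝒦)^⊥`. Its splitting, read in degree `n - 1`, splits
the original sequence, so `C_{n-1} ∈ ⊥(𝒦^⊥) = 𝒦`.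
-/

section SplitOrthogonality

variable {𝒞 : Type u'} [Category.{v'} 𝒞] [Abelian 𝒞]

lemma CategoryTheory.ShortComplex.ShortExact.pullback {Y E X W : 𝒞} {i : Y ⟶ E} {p : E ⟶ X}
    {w : i ≫ p = 0} (hse : (ShortComplex.mk i p w).ShortExact) (f : W ⟶ X) :
    (ShortComplex.mk (pullback.lift (f := f) (g := p) 0 i (by simp [w])) (pullback.fst f p)
      (pullback.lift_fst _ _ _)).ShortExact := by
  have := hse.epi_g
  have := hse.mono_f
  refine .mk' ?_ (mono_of_mono_fac (pullback.lift_snd _ _ _)) inferInstance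
  rw [ShortComplex.exact_iff_exact_up_to_refinements]
  intro A x₂ hx₂
  obtain ⟨A', π, hπ, x₁, fac⟩ := hse.exact.exact_up_to_refinements (x₂ ≫ pullback.snd f p)
    (by simpa [← pullback.condition] using hx₂ =≫ f)
  refine ⟨A', π, hπ, x₁, pullback.hom_ext ?_ ?_⟩
  · simpa only [Category.assoc, pullback.lift_fst, comp_zero] using π ≫= hx₂
  · simpa only [Category.assoc, pullback.lift_snd] using fac

lemma exists_lift_of_mem_leftPerpSplit {K : Set 𝒞} {W Y E X : 𝒞} (hW : W ∈ leftPerpSplit K)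
    {i : Y ⟶ E} {p : E ⟶ X} {w : i ≫ p = 0} (hse : (ShortComplex.mk i p w).ShortExact)
    (hY : Y ∈ K) (f : W ⟶ X) : ∃ g : W ⟶ E, g ≫ p = f := by
  obtain ⟨s, hs⟩ := hW _ _ _ (hse.pullback f) hY
  exact ⟨s ≫ pullback.snd f p, by rw [Category.assoc, ← pullback.condition, reassoc_of% hs]⟩

lemma subset_leftPerpSplit_rightPerpSplit (K : Set 𝒞) : K ⊆ leftPerpSplit (rightPerpSplit K) :=
  fun _ hX _ _ _ _ _ hse hY =>
    let ⟨r, hr⟩ := hY _ _ _ hse hX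
    let σ := ShortComplex.Splitting.ofExactOfRetraction _ hse.exact r hr hse.epi_g
    ⟨σ.s, σ.s_g⟩

end SplitOrthogonality

section Disk

variable (n : ℤ)

lemma disk_X_pred (Y : 𝒜) : (disk n Y).X (n - 1) = Y := if_pos (Or.inr rfl)

noncomputable def diskXIso (Y : 𝒜) {m : ℤ} (h : m = n ∨ m = n - 1) : (disk n Y).X m ≅ Y :=
  eqToIso (if_pos h)

lemma isZero_disk_X (Y : 𝒜) {m : ℤ} (h : ¬(m = n ∨ m = n - 1)) : IsZero ((disk n Y).X m) := by
  rw [show (disk n Y).X m = 0 from if_neg h]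
  exact isZero_zero 𝒜

lemma disk_d (Y : 𝒜) :
    (disk n Y).d n (n - 1) = (diskXIso n Y (.inl rfl)).hom ≫ (diskXIso n Y (.inr rfl)).inv :=
  dif_pos ⟨rfl, rfl⟩

instance (Y : 𝒜) : IsIso ((disk n Y).d n (n - 1)) := by
  rw [disk_d]
  infer_instance

lemma disk_d_eq_zero (Y : 𝒜) {a b : ℤ} (h : ¬(a = n ∧ b = n - 1)) : (disk n Y).d a b = 0 :=
  dif_neg h

variable {n} in
lemma disk_hom_ext {C : ChainComplex 𝒜 ℤ} {X : 𝒜} {φ ψ : C ⟶ disk n X}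
    (h : φ.f (n - 1) = ψ.f (n - 1)) : φ = ψ := by
  ext m
  by_cases hn : m = n
  · subst hn
    rw [← cancel_mono ((disk m X).d m (m - 1)), φ.comm, ψ.comm, h]
  by_cases hn' : m = n - 1
  · subst hn'
    exact h
  exact (isZero_disk_X n X (by tauto)).eq_of_tgt _ _

variable {n} in
noncomputable def diskMap {A B : 𝒜} (f : A ⟶ B) : disk n A ⟶ disk n B where
  f m := if h : m = n ∨ m = n - 1 then (diskXIso n A h).hom ≫ f ≫ (diskXIso n B h).inv else 0
  comm' i j _ := by
    by_cases h : i = n ∧ j = n - 1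
    · obtain ⟨rfl, rfl⟩ := h
      rw [dif_pos (.inl rfl), dif_pos (.inr rfl), disk_d, disk_d]
      simp
    · rw [disk_d_eq_zero n A h, disk_d_eq_zero n B h, zero_comp, comp_zero]

lemma diskMap_f {A B : 𝒜} (f : A ⟶ B) {m : ℤ} (h : m = n ∨ m = n - 1) :
    (diskMap f).f m = (diskXIso n A h).hom ≫ f ≫ (diskXIso n B h).inv :=
  dif_pos h

lemma diskMap_comp {A B C : 𝒜} (f : A ⟶ B) (g : B ⟶ C) :
    diskMap (n := n) (f ≫ g) = diskMap f ≫ diskMap g :=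
  disk_hom_ext (by simp [diskMap_f n _ (.inr rfl)])

lemma diskMap_zero (A B : 𝒜) : diskMap (n := n) (0 : A ⟶ B) = 0 :=
  disk_hom_ext (by simp [diskMap_f n _ (.inr rfl)])

lemma CategoryTheory.ShortComplex.ShortExact.diskMap {Y E X : 𝒜} {i : Y ⟶ E} {p : E ⟶ X}
    {w : i ≫ p = 0} (hse : (ShortComplex.mk i p w).ShortExact) :
    (ShortComplex.mk (diskMap (n := n) i) (diskMap p)
      (by rw [← diskMap_comp, w, diskMap_zero])).ShortExact := by
  refine HomologicalComplex.shortExact_of_degreewise_shortExact _ fun m => ?_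
  change (ShortComplex.mk ((_root_.diskMap (n := n) i).f m) ((_root_.diskMap p).f m) _).ShortExact
  by_cases h : m = n ∨ m = n - 1
  · refine ShortComplex.shortExact_of_iso (ShortComplex.isoMk (diskXIso n Y h).symm
      (diskXIso n E h).symm (diskXIso n X h).symm ?_ ?_) hse <;> simp [diskMap_f n _ h]
  · have hE := isZero_disk_X n E h
    exact .mk' (ShortComplex.exact_of_isZero_X₂ _ hE)
      ⟨fun _ _ _ => (isZero_disk_X n Y h).eq_of_tgt _ _⟩
      ⟨fun _ _ _ => (isZero_disk_X n X h).eq_of_src _ _⟩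

variable {n} in
noncomputable def toDisk {C : ChainComplex 𝒜 ℤ} {X : 𝒜} (g : C.X (n - 1) ⟶ X) : C ⟶ disk n X where
  f m :=
    if h : m = n then C.d m (n - 1) ≫ g ≫ (diskXIso n X (.inl h)).inv
    else if h' : m = n - 1 then (C.XIsoOfEq h').hom ≫ g ≫ (diskXIso n X (.inr h')).inv
    else 0
  comm' i j hij := by
    obtain rfl : j = i - 1 := by simp only [ComplexShape.down_Rel] at hij; omega
    by_cases hi : i = n
    · subst hi
      rw [dif_pos rfl, dif_neg (by omega), dif_pos rfl, disk_d]
      simp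
    · rw [disk_d_eq_zero n X (by tauto), comp_zero]
      by_cases hj : i - 1 = n
      · rw [dif_pos hj]
        subst hj
        simp
      · rw [dif_neg hj, dif_neg (by omega), comp_zero]

lemma toDisk_f_pred {C : ChainComplex 𝒜 ℤ} {X : 𝒜} (g : C.X (n - 1) ⟶ X) :
    (toDisk g).f (n - 1) = g ≫ (diskXIso n X (.inr rfl)).inv := by
  simp [toDisk]

end Disk

lemma disk_mem_rightPerpSplit_chCls {K : Set 𝒜} {Y : 𝒜} (hY : Y ∈ rightPerpSplit K) (n : ℤ) :
    disk n Y ∈ rightPerpSplit (ChCls K) := by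
  intro E Q ι π w hse hQ
  rw [← disk_X_pred n Y] at hY
  obtain ⟨r, hr⟩ := hY (ι.f (n - 1)) (π.f (n - 1)) _
    ((HomologicalComplex.shortExact_iff_degreewise_shortExact _).1 hse (n - 1)) (hQ (n - 1))
  refine ⟨toDisk (r ≫ (diskXIso n Y (.inr rfl)).hom), disk_hom_ext ?_⟩
  simpa [toDisk_f_pred] using hr

lemma mem_chCls_of_mem_leftPerpSplit {K : Set 𝒜} (hK : leftPerpSplit (rightPerpSplit K) ⊆ K)
    {C : ChainComplex 𝒜 ℤ} (hC : C ∈ leftPerpSplit (rightPerpSplit (ChCls K))) :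
    C ∈ ChCls K := by
  intro m
  obtain ⟨n, rfl⟩ : ∃ n, m = n - 1 := ⟨m + 1, by omega⟩
  refine hK fun Y E i p w hse hY => ?_
  obtain ⟨g, hg⟩ := exists_lift_of_mem_leftPerpSplit hC (hse.diskMap n)
    (disk_mem_rightPerpSplit_chCls hY n) (toDisk (𝟙 _))
  refine ⟨g.f (n - 1) ≫ (diskXIso n E (.inr rfl)).hom, ?_⟩
  have h := congr_arg (·.f (n - 1)) hg
  rw [← cancel_mono (diskXIso n (C.X (n - 1)) (.inr rfl)).inv]
  simpa [diskMap_f n p (.inr rfl), toDisk_f_pred] using h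

/-- If `(𝒦, 𝒦^⊥)` is a cotorsion theory in `𝒜`, then `(Ch(𝒦), Ch(𝒦)^⊥)` is a
cotorsion theory in `Ch(𝒜)`, and the disk complexes `Dⁿ(Y)` for `Y ∈ 𝒦^⊥` belong
to `Ch(𝒦)^⊥`. -/
theorem statement17 (K : Set 𝒜)
    (hcot : leftPerpSplit (rightPerpSplit K) = K) :
    leftPerpSplit (rightPerpSplit (ChCls K)) = ChCls K ∧
      ∀ Y ∈ rightPerpSplit K, ∀ n : ℤ, disk n Y ∈ rightPerpSplit (ChCls K) :=
  ⟨subset_antisymm (fun _ hC => mem_chCls_of_mem_leftPerpSplit hcot.subset hC)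
      (subset_leftPerpSplit_rightPerpSplit _),
    fun _ hY n => disk_mem_rightPerpSplit_chCls hY n⟩
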